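/- arXiv:2009.04977 — 6 statements merged into one kernel-verified Lean document; each statement's English description precedes it below -/
import Mathlib

section
/- For the hit-and-run top-to-random single-card Markov chain K on {1,...,n}, defined by K(i,j) = (1/n)∑_{k≥j} 1/k + (i-1)/n if i=j, K(i,j) = (1/n)∑_{k≥i} 1/k if j<i, and K(i,j) = (1/n)∑_{k≥j} 1/k if j>i, the vector Ψ_i with entries Ψ_i(l) = -1/(n-i) for l ≤ n-i, Ψ_i(n-i+1) = 1, and Ψ_i(l) = 0 for l > n-i+1, is an eigenvector of K with eigenvalue 1 - i/n, for each i = 1,...,n-1. -/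
/-!
With `H a = ∑_{a < k ≤ n} 1/k`, the kernel is `n K(r, j) = H (max r j) + r [r = j]` (positions
0-based) and `Ψ = e_m - (1/m) ∑_{l < m} e_l` with `m = n - i`. The identity `H a = 1/(a+1) + H (a+1)`
telescopes to `∑_{j < m} H (max r j) = m H (max r m) + (m - r)⁺`, so the `H`-part of `n K Ψ` at `r`
is `-(m - r)⁺ / m`; adding the diagonal part `r Ψ r` gives `m Ψ r` in each of the cases
`r < m`, `r = m`, `r > m`.
-/

open Finset

noncomputable def tailHarmonic (n a : ℕ) : ℝ := ∑ k ∈ Icc (a + 1) n, 1 / (k : ℝ)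

noncomputable def psi (m l : ℕ) : ℝ := if l < m then -1 / m else if l = m then 1 else 0

lemma tailHarmonic_eq_add {n a : ℕ} (ha : a < n) :
    tailHarmonic n a = 1 / ((a : ℝ) + 1) + tailHarmonic n (a + 1) := by
  rw [tailHarmonic, tailHarmonic, ← Ico_add_one_right_eq_Icc, ← Ico_add_one_right_eq_Icc,
    sum_eq_sum_Ico_succ_bot (by omega : a + 1 < n + 1)]
  push_cast
  rfl

lemma sum_range_tailHarmonic_max {n m : ℕ} (r : ℕ) (hm : m ≤ n) :
    ∑ j ∈ range m, tailHarmonic n (max r j) =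
      m * tailHarmonic n (max r m) + ((m - r : ℕ) : ℝ) := by
  induction m with
  | zero => simp
  | succ m ih =>
    rw [sum_range_succ, ih (by omega)]
    rcases lt_or_ge m r with hrm | hrm
    · rw [max_eq_left hrm.le, max_eq_left hrm, Nat.sub_eq_zero_of_le hrm.le,
        Nat.sub_eq_zero_of_le hrm]
      push_cast
      ring
    · rw [max_eq_right hrm, max_eq_right (by omega), tailHarmonic_eq_add (by omega),
        Nat.sub_add_comm hrm]
      push_cast
      field_simp
      ring

lemma sum_range_mul_psi (g : ℕ → ℝ) {n m : ℕ} (hm : m < n) :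
    ∑ j ∈ range n, g j * psi m j = g m - (∑ j ∈ range m, g j) / m := by
  have hvanish : ∀ j ∈ range n, j ∉ range (m + 1) → g j * psi m j = 0 := by
    intro j _ hj
    rw [mem_range] at hj
    simp only [psi, if_neg (show ¬ j < m by omega), if_neg (show j ≠ m by omega), mul_zero]
  have hbelow : ∀ j ∈ range m, g j * psi m j = g j * (-1 / m) := by
    intro j hj
    rw [psi, if_pos (mem_range.mp hj)]
  rw [← sum_subset (range_subset_range.mpr hm) hvanish, sum_range_succ, sum_congr rfl hbelow,
    ← sum_mul, psi, if_neg (lt_irrefl m), if_pos rfl]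
  ring

lemma sum_range_tailHarmonic_max_mul_psi {n m : ℕ} (r : ℕ) (hm0 : 0 < m) (hm : m < n) :
    ∑ j ∈ range n, tailHarmonic n (max r j) * psi m j = -((m - r : ℕ) : ℝ) / m := by
  rw [sum_range_mul_psi _ hm, sum_range_tailHarmonic_max r hm.le]
  field_simp
  ring

lemma sum_range_kernel_mul_psi {n m : ℕ} (r : ℕ) (hm0 : 0 < m) (hm : m < n) :
    ∑ j ∈ range n, (tailHarmonic n (max r j) + if r = j then (r : ℝ) else 0) * psi m j =
      m * psi m r := by
  simp only [add_mul, sum_add_distrib, ite_mul, zero_mul, sum_ite_eq,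
    sum_range_tailHarmonic_max_mul_psi r hm0 hm]
  have hm' : (m : ℝ) ≠ 0 := by positivity
  rcases lt_trichotomy r m with hrm | rfl | hrm
  · rw [if_pos (mem_range.mpr (by omega)), Nat.cast_sub hrm.le, psi, if_pos hrm]
    field_simp
    ring
  · simp [psi, hm]
  · have hψ : psi m r = 0 := by rw [psi, if_neg (by omega), if_neg (by omega)]
    simp [Nat.sub_eq_zero_of_le hrm.le, hψ]

theorem stmt_0_general (n : ℕ) (K : Matrix (Fin n) (Fin n) ℝ)
    (hK : ∀ i j : Fin n,
      K i j =
        if i = j then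
          (1 / (n : ℝ)) * ∑ k ∈ Finset.Icc (j.val + 1) n, 1 / (k : ℝ) + (i.val : ℝ) / n
        else if j < i then (1 / (n : ℝ)) * ∑ k ∈ Finset.Icc (i.val + 1) n, 1 / (k : ℝ)
        else (1 / (n : ℝ)) * ∑ k ∈ Finset.Icc (j.val + 1) n, 1 / (k : ℝ))
    (i : ℕ) (hi : 1 ≤ i) (hi' : i ≤ n - 1)
    (Ψ : Fin n → ℝ)
    (hΨ : ∀ l : Fin n,
      Ψ l = if l.val + 1 ≤ n - i then -1 / ((n : ℝ) - i)
        else if l.val + 1 = n - i + 1 then 1 else 0) :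
    K.mulVec Ψ = (1 - (i : ℝ) / n) • Ψ := by
  have hcast : ((n - i : ℕ) : ℝ) = n - i := Nat.cast_sub (by omega)
  have hn : (n : ℝ) ≠ 0 := by norm_cast; omega
  have hK' : ∀ r j : Fin n,
      K r j = (tailHarmonic n (max r.val j.val) + if r.val = j.val then (r.val : ℝ) else 0) / n := by
    intro r j
    rw [hK, tailHarmonic]
    simp only [Fin.ext_iff, Fin.lt_def]
    split_ifs with h₁ h₂
    · rw [h₁, max_self]
      ring
    · rw [max_eq_left h₂.le]
      ring
    · rw [max_eq_right (by omega)]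
      ring
  have hΨ' : ∀ l : Fin n, Ψ l = psi (n - i) l.val := by
    intro l
    rw [hΨ, psi, ← hcast]
    simp only [Nat.add_one_le_iff, Nat.add_right_cancel_iff]
  ext r
  have hrow := sum_range_kernel_mul_psi (n := n) r.val (m := n - i) (by omega) (by omega)
  simp only [Matrix.mulVec, dotProduct, hK', hΨ', Pi.smul_apply, smul_eq_mul, div_mul_eq_mul_div,
    ← sum_div]
  rw [Fin.sum_univ_eq_sum_range (fun j => (tailHarmonic n (max r.val j) +
    if r.val = j then (r.val : ℝ) else 0) * psi (n - i) j), hrow, hcast]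
  field_simp

/-- The vector Ψ_i is an eigenvector of the single-card kernel K of the
hit-and-run top-to-random shuffle, with eigenvalue 1 - i/n. Positions are
1-based via `l.val + 1`. -/
theorem stmt_0 (n : ℕ) (hn : 2 ≤ n) (K : Matrix (Fin n) (Fin n) ℝ)
    (hK : ∀ i j : Fin n,
      K i j =
        if i = j then
          (1 / (n : ℝ)) * ∑ k ∈ Finset.Icc (j.val + 1) n, 1 / (k : ℝ) + (i.val : ℝ) / n
        else if j < i then (1 / (n : ℝ)) * ∑ k ∈ Finset.Icc (i.val + 1) n, 1 / (k : ℝ)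
        else (1 / (n : ℝ)) * ∑ k ∈ Finset.Icc (j.val + 1) n, 1 / (k : ℝ))
    (i : ℕ) (hi : 1 ≤ i) (hi' : i ≤ n - 1)
    (Ψ : Fin n → ℝ)
    (hΨ : ∀ l : Fin n,
      Ψ l = if l.val + 1 ≤ n - i then -1 / ((n : ℝ) - i)
        else if l.val + 1 = n - i + 1 then 1 else 0) :
    K.mulVec Ψ = (1 - (i : ℝ) / n) • Ψ :=
  stmt_0_general n K hK i hi hi' Ψ hΨ
end

section
/- The n×n matrix K of the single-card chain (as defined) has eigenvalues exactly 1, 1 - 1/n, 1 - 2/n, ..., 1 - (n-1)/n, each with multiplicity one; in particular all eigenvalues of K are nonnegative. -/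
/-!
Write `K = D + U C Uᵀ` with `D = diag(i/n)`, `C = diag(1/(n(i+1)))` and `U` the upper-triangular
all-ones matrix. The inverse of `U` is `1 - S`, with `S` the superdiagonal shift, and
`U⁻¹ K U = U⁻¹ D U + C UᵀU`. Since `(UᵀU) i j = min i j + 1`, the entries of `U⁻¹ K U` above the
diagonal are `i/n - (i+1)/n + (i+1)/(n(i+1)) = 0` and its diagonal entries are `(i+1)/n`, so `K` is
similar to a lower-triangular matrix with diagonal `1/n, 2/n, …, 1`.
-/

open Finset Polynomial Matrix

namespace Matrix

variable {R : Type*} {n : ℕ}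

def upperOnes (R : Type*) [Zero R] [One R] (n : ℕ) : Matrix (Fin n) (Fin n) R :=
  of fun i j => if i ≤ j then 1 else 0

def shiftUp (R : Type*) [Zero R] [One R] (n : ℕ) : Matrix (Fin n) (Fin n) R :=
  of fun i j => if (j : ℕ) = i + 1 then 1 else 0

section Semiring

variable [NonAssocSemiring R]

theorem shiftUp_mul_apply {α : Type*} (A : Matrix (Fin n) α R) (i : Fin n) (j : α) :
    (shiftUp R n * A) i j = if h : (i : ℕ) + 1 < n then A ⟨i + 1, h⟩ j else 0 := by
  rw [mul_apply]
  split_ifs with h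
  · rw [Fintype.sum_eq_single ⟨i + 1, h⟩ fun k hk => by simp [shiftUp, Fin.ext_iff.not.mp hk]]
    simp [shiftUp]
  · exact Fintype.sum_eq_zero _ fun k => by simp [shiftUp]; omega

theorem diagonal_mul_upperOnes_apply (d : Fin n → R) (i j : Fin n) :
    (diagonal d * upperOnes R n) i j = if i ≤ j then d i else 0 := by
  simp [upperOnes]

theorem transpose_upperOnes_mul_upperOnes_apply (i j : Fin n) :
    ((upperOnes R n)ᵀ * upperOnes R n) i j = ((min i j : Fin n) : ℕ) + 1 := by
  simp only [mul_apply, transpose_apply, upperOnes, of_apply, mul_boole, ← ite_and,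
    ← le_min_iff, sum_boole, filter_ge_eq_Iic, Fin.card_Iic, min_comm j i]
  push_cast; rfl

theorem upperOnes_mul_diagonal_mul_transpose_apply (c : Fin n → R) (i j : Fin n) :
    (upperOnes R n * diagonal c * (upperOnes R n)ᵀ) i j = ∑ m, if max i j ≤ m then c m else 0 := by
  rw [mul_apply]
  simp only [mul_diagonal, transpose_apply, upperOnes, of_apply, boole_mul, mul_boole,
    ← ite_and, max_le_iff, and_comm]

end Semiring

theorem one_sub_shiftUp_mul_upperOnes [Ring R] : (1 - shiftUp R n) * upperOnes R n = 1 := by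
  ext i j
  rw [sub_mul, one_mul, sub_apply, shiftUp_mul_apply]
  simp only [upperOnes, of_apply, one_apply, Fin.le_def, Fin.ext_iff]
  split_ifs <;> simp <;> omega

theorem one_sub_shiftUp_mul_diagonal_add_mul_upperOnes_apply [CommRing R] (d c : ℕ → R)
    {i j : Fin n} (hij : i ≤ j) :
    ((1 - shiftUp R n) * (diagonal (fun k : Fin n => d k) +
        upperOnes R n * diagonal (fun k : Fin n => c k) * (upperOnes R n)ᵀ) * upperOnes R n) i j =
      d i - (if i < j then d (i + 1) else 0) + (i + 1) * c i := by
  have hconj : (1 - shiftUp R n) * (diagonal (fun k : Fin n => d k) +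
        upperOnes R n * diagonal (fun k : Fin n => c k) * (upperOnes R n)ᵀ) * upperOnes R n =
      (1 - shiftUp R n) * (diagonal (fun k : Fin n => d k) * upperOnes R n) +
        diagonal (fun k : Fin n => c k) * ((upperOnes R n)ᵀ * upperOnes R n) := by
    simp only [mul_add, add_mul, ← mul_assoc, one_sub_shiftUp_mul_upperOnes, one_mul]
  rw [hconj, add_apply, sub_mul, one_mul, sub_apply, shiftUp_mul_apply,
    diagonal_mul_upperOnes_apply, diagonal_mul, transpose_upperOnes_mul_upperOnes_apply,
    min_eq_left hij, if_pos hij]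
  simp only [diagonal_mul_upperOnes_apply, Fin.lt_def, Fin.le_def]
  split_ifs <;> first | omega | ring

theorem charpoly_mul_mul_of_mul_eq_one [CommRing R] {ι : Type*} [Fintype ι] [DecidableEq ι]
    {L P : Matrix ι ι R} (h : L * P = 1) (A : Matrix ι ι R) :
    (L * A * P).charpoly = A.charpoly := by
  rw [charpoly_mul_comm, ← mul_assoc, mul_eq_one_comm.mp h, one_mul]

theorem charpoly_of_isLowerTriangular [CommRing R] {ι : Type*} [Fintype ι] [DecidableEq ι]
    [LinearOrder ι] (M : Matrix ι ι R) (h : M.IsLowerTriangular) :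
    M.charpoly = ∏ i, (X - C (M i i)) := by
  rw [← charpoly_transpose]
  exact charpoly_of_isUpperTriangular _ fun i j hij => h hij

end Matrix

theorem Finset.sum_fin_ite_le_eq_sum_Icc {M : Type*} [AddCommMonoid M] (f : ℕ → M) (n a : ℕ) :
    ∑ m : Fin n, (if a ≤ (m : ℕ) then f (m + 1) else 0) = ∑ k ∈ Icc (a + 1) n, f k := by
  have hfilter : {m ∈ range n | a ≤ m} = Ico a n := by ext; simp [and_comm]
  rw [Fin.sum_univ_eq_sum_range (fun m => if a ≤ m then f (m + 1) else 0), ← sum_filter, hfilter,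
    sum_Ico_add', Ico_add_one_right_eq_Icc]

theorem Finset.prod_range_succ_div_eq_prod_range_one_sub_div {K M : Type*} [Field K] [CharZero K]
    [CommMonoid M] (f : K → M) (n : ℕ) :
    ∏ i ∈ range n, f ((i + 1) / n) = ∏ i ∈ range n, f (1 - i / n) := by
  rw [← prod_range_reflect]
  refine prod_congr rfl fun i hi => congrArg f ?_
  have hi : i < n := mem_range.mp hi
  have hn : (n : K) ≠ 0 := by exact_mod_cast (i.zero_le.trans_lt hi).ne'
  rw [Nat.cast_sub (by omega), Nat.cast_sub (by omega)]
  field_simp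
  ring

theorem singleCardKernel_eq_diagonal_add {n : ℕ} {K : Matrix (Fin n) (Fin n) ℝ}
    (hK : ∀ i j : Fin n,
      K i j =
        if i = j then
          (1 / (n : ℝ)) * ∑ k ∈ Finset.Icc (j.val + 1) n, 1 / (k : ℝ) + (i.val : ℝ) / n
        else if j < i then (1 / (n : ℝ)) * ∑ k ∈ Finset.Icc (i.val + 1) n, 1 / (k : ℝ)
        else (1 / (n : ℝ)) * ∑ k ∈ Finset.Icc (j.val + 1) n, 1 / (k : ℝ)) :
    K = diagonal (fun k : Fin n => (k : ℝ) / n) +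
      upperOnes ℝ n * diagonal (fun k : Fin n => 1 / (n * ((k : ℝ) + 1))) * (upperOnes ℝ n)ᵀ := by
  have htail (a : ℕ) : ∑ m : Fin n, (if a ≤ (m : ℕ) then 1 / (n * ((m : ℝ) + 1)) else 0) =
      1 / n * ∑ k ∈ Icc (a + 1) n, 1 / (k : ℝ) := by
    rw [mul_sum, ← sum_fin_ite_le_eq_sum_Icc]
    push_cast
    simp only [one_div, mul_inv]
  ext i j
  rw [hK, Matrix.add_apply, upperOnes_mul_diagonal_mul_transpose_apply]
  simp only [Fin.le_def]
  rw [htail, diagonal_apply]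
  rcases lt_trichotomy i j with hij | rfl | hij
  · simp [hij.ne, hij.not_gt, max_eq_right hij.le]
  · simp [add_comm]
  · simp [hij.ne', hij, max_eq_left hij.le]

theorem stmt_1_general (n : ℕ) (K : Matrix (Fin n) (Fin n) ℝ)
    (hK : ∀ i j : Fin n,
      K i j =
        if i = j then
          (1 / (n : ℝ)) * ∑ k ∈ Finset.Icc (j.val + 1) n, 1 / (k : ℝ) + (i.val : ℝ) / n
        else if j < i then (1 / (n : ℝ)) * ∑ k ∈ Finset.Icc (i.val + 1) n, 1 / (k : ℝ)
        else (1 / (n : ℝ)) * ∑ k ∈ Finset.Icc (j.val + 1) n, 1 / (k : ℝ)) :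
    K.charpoly = ∏ i ∈ Finset.range n, (X - C (1 - (i : ℝ) / n)) ∧
      ∀ μ : ℝ, K.charpoly.IsRoot μ → 0 ≤ μ := by
  set M := (1 - shiftUp ℝ n) * K * upperOnes ℝ n with hMdef
  have hM {i j : Fin n} (hij : i ≤ j) : M i j = i / n -
      (if i < j then (((i : ℕ) + 1 : ℕ) : ℝ) / n else 0) + (i + 1) * (1 / (n * ((i : ℝ) + 1))) := by
    rw [hMdef, singleCardKernel_eq_diagonal_add hK]
    exact one_sub_shiftUp_mul_diagonal_add_mul_upperOnes_apply (fun k : ℕ => (k : ℝ) / n)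
      (fun k : ℕ => 1 / (n * ((k : ℝ) + 1))) hij
  have hlower : M.IsLowerTriangular := fun i j hij => by
    have hij : i < j := OrderDual.toDual_lt_toDual.mp hij
    rw [hM hij.le, if_pos hij]
    field_simp
    push_cast
    ring
  have hcharpoly : K.charpoly = ∏ i ∈ range n, (X - C (((i : ℝ) + 1) / n)) := by
    rw [← charpoly_mul_mul_of_mul_eq_one one_sub_shiftUp_mul_upperOnes K,
      charpoly_of_isLowerTriangular M hlower,
      ← Fin.prod_univ_eq_prod_range (fun i => X - C (((i : ℝ) + 1) / n))]
    refine prod_congr rfl fun i _ => ?_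
    rw [hM le_rfl, if_neg (lt_irrefl i)]
    congr 2
    field_simp
    ring
  rw [hcharpoly, prod_range_succ_div_eq_prod_range_one_sub_div (fun a => X - C a)]
  refine ⟨rfl, fun μ hμ => ?_⟩
  obtain ⟨i, hi, hroot⟩ := (isRoot_prod _ _ μ).mp hμ
  rw [← root_X_sub_C.mp hroot, sub_nonneg]
  exact div_le_one_of_le₀ (by exact_mod_cast (mem_range.mp hi).le) n.cast_nonneg

/-- The single-card kernel K has characteristic polynomial
∏_{i=0}^{n-1} (X - (1 - i/n)), i.e. eigenvalues 1, 1-1/n, ..., 1-(n-1)/n,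
each with multiplicity one; in particular every eigenvalue is nonnegative. -/
theorem stmt_1 (n : ℕ) (hn : 2 ≤ n) (K : Matrix (Fin n) (Fin n) ℝ)
    (hK : ∀ i j : Fin n,
      K i j =
        if i = j then
          (1 / (n : ℝ)) * ∑ k ∈ Finset.Icc (j.val + 1) n, 1 / (k : ℝ) + (i.val : ℝ) / n
        else if j < i then (1 / (n : ℝ)) * ∑ k ∈ Finset.Icc (i.val + 1) n, 1 / (k : ℝ)
        else (1 / (n : ℝ)) * ∑ k ∈ Finset.Icc (j.val + 1) n, 1 / (k : ℝ)) :
    K.charpoly = ∏ i ∈ Finset.range n, (X - C (1 - (i : ℝ) / n)) ∧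
      ∀ μ : ℝ, K.charpoly.IsRoot μ → 0 ≤ μ :=
  stmt_1_general n K hK
end

section
/- Let G be a finite group and S = (s_1,...,s_k) a tuple of elements of G with orders m_1,...,m_k. Let q_S = (1/k)∑_{i=1}^k (1/m_i)∑_{j=0}^{m_i - 1} δ_{s_i^j} be the hit-and-run measure, and let Q(x,y) = q_S(x⁻¹y). Then the operator Q on L²(G) (with uniform measure) is positive semidefinite: for every f : G → ℝ, ∑_{x,y∈G} f(x) Q(x,y) f(y) ≥ 0. -/
open Finset

/-! Writing `y = x g`, the quadratic form is `∑_g q(g) A(g)` with `A(g) = ∑_x f(x) f(x g)`, and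
`q_S` is an average of uniform measures on the cyclic subgroups `⟨s_i⟩`. For a subgroup `H`, put
`F(x) = ∑_{h ∈ H} f(x h)`; it is constant on left cosets of `H`, so
`∑_{h ∈ H} A(h) = ∑_x f(x) F(x) = |H|⁻¹ ∑_x F(x)² ≥ 0`. -/

section

variable {G : Type*} [Group G]

theorem sum_ite_eq_pow_mul [DecidableEq G] [Fintype G] (t : G) (n : ℕ) (A : G → ℝ) :
    ∑ g, (∑ j ∈ range n, if g = t ^ j then (1 : ℝ) else 0) * A g = ∑ j ∈ range n, A (t ^ j) := by
  simp_rw [sum_mul, ite_mul, one_mul, zero_mul]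
  rw [sum_comm]
  simp

theorem sum_subgroup_mul_right_mul (H : Subgroup G) [Fintype H] (f : G → ℝ) (x : G) (h : H) :
    ∑ h' : H, f (x * h * h') = ∑ h' : H, f (x * h') :=
  Fintype.sum_equiv (Equiv.mulLeft h) _ _ fun h' => by simp [mul_assoc]

variable [Fintype G]

theorem sum_sum_mul_apply_inv_mul_mul (q f : G → ℝ) :
    ∑ x, ∑ y, f x * q (x⁻¹ * y) * f y = ∑ g, q g * ∑ x, f x * f (x * g) := by
  calc ∑ x, ∑ y, f x * q (x⁻¹ * y) * f y = ∑ x, ∑ g, q g * (f x * f (x * g)) :=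
        sum_congr rfl fun x _ => (Fintype.sum_equiv (Equiv.mulLeft x) _ _ fun g => by
          simp only [Equiv.coe_mulLeft, inv_mul_cancel_left]; ring).symm
    _ = ∑ g, q g * ∑ x, f x * f (x * g) := by
      rw [sum_comm]; simp_rw [mul_sum]

theorem sum_subgroup_sum_mul_mul_right_nonneg (H : Subgroup G) [Fintype H] (f : G → ℝ) :
    0 ≤ ∑ h : H, ∑ x, f x * f (x * h) := by
  set F : G → ℝ := fun x => ∑ h : H, f (x * h)
  have hsq : ∑ x, F x * F x = Fintype.card H * ∑ h : H, ∑ x, f x * f (x * h) := by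
    calc ∑ x, F x * F x = ∑ h : H, ∑ x, f (x * h) * F (x * h) := by
          simp_rw [F, sum_subgroup_mul_right_mul, sum_mul]
          rw [sum_comm]
      _ = ∑ h : H, ∑ x, f x * F x := by
          refine sum_congr rfl fun h _ => ?_
          exact Fintype.sum_equiv (Equiv.mulRight (h : G)) _ _ fun x => rfl
      _ = Fintype.card H * ∑ h : H, ∑ x, f x * f (x * h) := by
          simp_rw [F, mul_sum, sum_const, card_univ, nsmul_eq_mul]
          rw [sum_comm, mul_sum]
          simp_rw [mul_sum]
  have hH : (0 : ℝ) < Fintype.card H := by exact_mod_cast Fintype.card_pos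
  have : 0 ≤ (Fintype.card H : ℝ) * ∑ h : H, ∑ x, f x * f (x * h) :=
    hsq ▸ sum_nonneg fun x _ => mul_self_nonneg (F x)
  exact nonneg_of_mul_nonneg_right this hH

theorem sum_range_orderOf_sum_mul_mul_pow_nonneg (t : G) (f : G → ℝ) :
    0 ≤ ∑ j ∈ range (orderOf t), ∑ x, f x * f (x * t ^ j) := by
  have hsum := Fintype.sum_equiv (finEquivZPowers (isOfFinOrder_of_finite t))
    (fun j => ∑ x, f x * f (x * t ^ (j : ℕ))) (fun h => ∑ x, f x * f (x * h)) fun j => by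
      simp [finEquivZPowers_apply]
  rw [← Fin.sum_univ_eq_sum_range (fun j => ∑ x, f x * f (x * t ^ j)), hsum]
  exact sum_subgroup_sum_mul_mul_right_nonneg _ f

end

theorem stmt_3_general (G : Type*) [Group G] [Fintype G] [DecidableEq G]
    (k : ℕ) (s : Fin k → G)
    (q : G → ℝ)
    (hq : ∀ g : G, q g = (1 / (k : ℝ)) * ∑ i : Fin k,
      (1 / (orderOf (s i) : ℝ)) * ∑ j ∈ Finset.range (orderOf (s i)),
        (if g = (s i) ^ j then (1 : ℝ) else 0))
    (f : G → ℝ) :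
    0 ≤ ∑ x : G, ∑ y : G, f x * q (x⁻¹ * y) * f y := by
  have hform : ∑ x, ∑ y, f x * q (x⁻¹ * y) * f y = (1 / (k : ℝ)) * ∑ i : Fin k,
      (1 / (orderOf (s i) : ℝ)) * ∑ j ∈ range (orderOf (s i)), ∑ x, f x * f (x * s i ^ j) := by
    calc ∑ x, ∑ y, f x * q (x⁻¹ * y) * f y = ∑ g, q g * ∑ x, f x * f (x * g) :=
          sum_sum_mul_apply_inv_mul_mul q f
      _ = (1 / (k : ℝ)) * ∑ i : Fin k, (1 / (orderOf (s i) : ℝ)) *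
            ∑ g, (∑ j ∈ range (orderOf (s i)), if g = s i ^ j then (1 : ℝ) else 0) *
              ∑ x, f x * f (x * g) := by
          simp only [hq, sum_mul, mul_sum, mul_assoc]
          exact (sum_congr rfl fun g _ => sum_comm).trans sum_comm
      _ = _ := by simp_rw [sum_ite_eq_pow_mul]
  rw [hform]
  exact mul_nonneg (by positivity) (sum_nonneg fun i _ =>
    mul_nonneg (by positivity) (sum_range_orderOf_sum_mul_mul_pow_nonneg (s i) f))

/-- The hit-and-run kernel Q(x,y) = q_S(x⁻¹y) associated to any tuple
(s_1,...,s_k) of elements of a finite group is positive semidefinite. -/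
theorem stmt_3 (G : Type*) [Group G] [Fintype G] [DecidableEq G]
    (k : ℕ) (hk : 1 ≤ k) (s : Fin k → G)
    (q : G → ℝ)
    (hq : ∀ g : G, q g = (1 / (k : ℝ)) * ∑ i : Fin k,
      (1 / (orderOf (s i) : ℝ)) * ∑ j ∈ Finset.range (orderOf (s i)),
        (if g = (s i) ^ j then (1 : ℝ) else 0))
    (f : G → ℝ) :
    0 ≤ ∑ x : G, ∑ y : G, f x * q (x⁻¹ * y) * f y :=
  stmt_3_general G k s q hq f
end

section
/- For the single-card chain K (hit-and-run top-to-random), the L² distance from stationarity starting at the bottom position n is exactly d₂(K^t(n,·), u)² = (1 − 1/n)^{2t} (n−1) for all t ≥ 0. -/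
/-!
Row `n` of `K` is `u + (1 - 1/n) (δₙ - u)`, and `u` is stationary because the columns of `K` sum
to one. Hence `δₙ - u` is a left eigenvector for the eigenvalue `1 - 1/n`, so
`K^t(n,·) = u + (1 - 1/n)^t (δₙ - u)`, and `d₂(δₙ, u)² = n - 1`.
-/

open Finset Matrix

theorem Matrix.pow_row_of_vecMul_eq {ι R : Type*} [Fintype ι] [DecidableEq ι] [CommRing R]
    {K : Matrix ι ι R} {u : ι → R} {i : ι} {c : R} (hu : u ᵥ* K = u)
    (hi : K i = u + c • (Pi.single i 1 - u)) (t : ℕ) :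
    (K ^ t) i = u + c ^ t • (Pi.single i 1 - u) := by
  induction t with
  | zero => ext j; simp [one_eq_pi_single]
  | succ t ih =>
    rw [pow_succ, mul_apply_eq_vecMul, ih, add_vecMul, smul_vecMul, sub_vecMul,
      single_one_vecMul, row, hu, hi]
    module

theorem sum_sum_Icc_max_succ {M : Type*} [AddCommMonoid M] (n j : ℕ) (f : ℕ → M) :
    ∑ i ∈ range n, ∑ k ∈ Icc (max i j + 1) n, f k = ∑ k ∈ Icc (j + 1) n, k • f k := by
  rw [sum_comm' (t' := Icc (j + 1) n) (s' := range)]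
  · simp
  · intro i k
    simp only [mem_range, mem_Icc]
    omega

theorem sum_sq_single_sub_inv_card {ι : Type*} [Fintype ι] [DecidableEq ι] (i : ι) :
    ∑ j, ((Pi.single i 1 : ι → ℝ) j - 1 / (Fintype.card ι : ℝ)) ^ 2 =
      1 - 1 / (Fintype.card ι : ℝ) := by
  have hpos : 0 < Fintype.card ι := Fintype.card_pos_iff.2 ⟨i⟩
  have hcard : (Fintype.card ι : ℝ) ≠ 0 := by positivity
  rw [← Finset.add_sum_erase _ _ (mem_univ i)]
  simp only [Pi.single_eq_same]
  rw [sum_congr rfl fun j hj => by rw [Pi.single_eq_of_ne (ne_of_mem_erase hj)], sum_const,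
    card_erase_of_mem (mem_univ i), card_univ, nsmul_eq_mul, Nat.cast_sub hpos]
  field_simp
  ring

/-- Positions are `0`-indexed: `i : Fin n` is position `i + 1` of the chain. -/
noncomputable def hitAndRunKernel (n : ℕ) : Matrix (Fin n) (Fin n) ℝ :=
  Matrix.of fun i j =>
    1 / (n : ℝ) * ∑ k ∈ Icc (max i.val j.val + 1) n, 1 / (k : ℝ) +
      if i = j then (i.val : ℝ) / n else 0

theorem hitAndRunKernel_sum_col {n : ℕ} (j : Fin n) : ∑ i, hitAndRunKernel n i j = 1 := by
  have hj : j.val < n := j.isLt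
  have hn : (n : ℝ) ≠ 0 := Nat.cast_ne_zero.2 (by omega)
  have hcount : ∑ i : Fin n, ∑ k ∈ Icc (max i.val j.val + 1) n, 1 / (k : ℝ) = n - j := by
    have hk : ∀ k ∈ Icc (j.val + 1) n, k • (1 / (k : ℝ)) = 1 := fun k hk => by
      rw [nsmul_eq_mul, mul_one_div_cancel (Nat.cast_ne_zero.2 (by rw [mem_Icc] at hk; omega))]
    rw [Fin.sum_univ_eq_sum_range (fun i => ∑ k ∈ Icc (max i j.val + 1) n, 1 / (k : ℝ)),
      sum_sum_Icc_max_succ, sum_congr rfl hk]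
    simp [Nat.cast_sub hj.le]
  simp only [hitAndRunKernel, of_apply, sum_add_distrib, ← mul_sum, hcount,
    sum_ite_eq', mem_univ, if_true]
  field_simp
  ring

theorem hitAndRunKernel_row_last {n : ℕ} (i : Fin n) (hi : i.val + 1 = n) :
    hitAndRunKernel n i = (fun _ => 1 / (n : ℝ)) + (1 - 1 / (n : ℝ)) •
      (Pi.single i 1 - fun _ => 1 / (n : ℝ)) := by
  ext j
  have hi' : (i.val : ℝ) = n - 1 := by rw [eq_sub_iff_add_eq]; exact_mod_cast hi
  have hn : (n : ℝ) ≠ 0 := Nat.cast_ne_zero.2 (by omega)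
  simp only [hitAndRunKernel, of_apply, max_eq_left (show j.val ≤ i.val by omega), hi, Icc_self,
    sum_singleton, Pi.add_apply, Pi.smul_apply, Pi.sub_apply, Pi.single_apply, eq_comm (a := j),
    smul_eq_mul, hi']
  split_ifs <;> field_simp <;> ring

theorem const_vecMul_hitAndRunKernel (n : ℕ) (c : ℝ) :
    (fun _ => c) ᵥ* hitAndRunKernel n = fun _ => c := by
  ext j
  simp only [vecMul, dotProduct, ← mul_sum, hitAndRunKernel_sum_col, mul_one]

theorem eq_hitAndRunKernel {n : ℕ} {K : Matrix (Fin n) (Fin n) ℝ}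
    (hK : ∀ i j : Fin n,
      K i j =
        if i = j then
          (1 / (n : ℝ)) * ∑ k ∈ Finset.Icc (j.val + 1) n, 1 / (k : ℝ) + (i.val : ℝ) / n
        else if j < i then (1 / (n : ℝ)) * ∑ k ∈ Finset.Icc (i.val + 1) n, 1 / (k : ℝ)
        else (1 / (n : ℝ)) * ∑ k ∈ Finset.Icc (j.val + 1) n, 1 / (k : ℝ)) :
    K = hitAndRunKernel n := by
  ext i j
  rw [hK, hitAndRunKernel, Matrix.of_apply]
  split_ifs with hij hji
  · simp [hij]
  · rw [max_eq_left (Fin.le_iff_val_le_val.1 hji.le), add_zero]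
  · rw [max_eq_right (Fin.le_iff_val_le_val.1 (not_lt.1 hji)), add_zero]

/-- For the single-card chain K of the hit-and-run top-to-random shuffle,
starting from the bottom position n,
d₂(K^t(n,·), u)² = (1 - 1/n)^{2t} (n - 1) for all t ≥ 0. -/
theorem stmt_15 (n : ℕ) (hn : 2 ≤ n) (K : Matrix (Fin n) (Fin n) ℝ)
    (hK : ∀ i j : Fin n,
      K i j =
        if i = j then
          (1 / (n : ℝ)) * ∑ k ∈ Finset.Icc (j.val + 1) n, 1 / (k : ℝ) + (i.val : ℝ) / n
        else if j < i then (1 / (n : ℝ)) * ∑ k ∈ Finset.Icc (i.val + 1) n, 1 / (k : ℝ)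
        else (1 / (n : ℝ)) * ∑ k ∈ Finset.Icc (j.val + 1) n, 1 / (k : ℝ))
    (t : ℕ) :
    (n : ℝ) * ∑ j : Fin n,
        ((K ^ t) (⟨n - 1, by omega⟩ : Fin n) j - 1 / (n : ℝ)) ^ 2 =
      (1 - 1 / (n : ℝ)) ^ (2 * t) * ((n : ℝ) - 1) := by
  obtain rfl := eq_hitAndRunKernel hK
  set bottom : Fin n := ⟨n - 1, by omega⟩
  have hrow := Matrix.pow_row_of_vecMul_eq (const_vecMul_hitAndRunKernel n (1 / n))
    (hitAndRunKernel_row_last bottom (by simp only [bottom]; omega)) t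
  have hterm : ∀ j, ((hitAndRunKernel n ^ t) bottom j - 1 / (n : ℝ)) ^ 2 =
      (1 - 1 / (n : ℝ)) ^ (2 * t) * ((Pi.single bottom 1 : Fin n → ℝ) j - 1 / n) ^ 2 := by
    intro j
    simp only [hrow, Pi.add_apply, Pi.smul_apply, Pi.sub_apply, smul_eq_mul]
    ring
  have hdist := sum_sq_single_sub_inv_card bottom
  rw [Fintype.card_fin] at hdist
  have hn0 : (n : ℝ) ≠ 0 := Nat.cast_ne_zero.2 (by omega)
  rw [sum_congr rfl fun j _ => hterm j, ← mul_sum, hdist]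
  field_simp
end

section
/- For the hit-and-run top-to-random measure q on S_n, the L² distance from uniform satisfies the lower bound d₂(q^{(t)}, u) ≥ √(n−1) · (1 − 1/n)^t for all t ≥ 1. -/
/-!
Let `a` be the bottom position and `f π = 1[π a = a] - 1/n`, a matrix coefficient of the
(n-1)-dimensional standard representation. The shuffles `σ i` with `i < n` fix `a`, and the
powers `σ n ^ j`, `j < n`, send `a` to every position exactly once; hence `f` is an eigenfunction
of convolution by `q` with eigenvalue `1 - 1/n`, so that `⟨q⁽ᵗ⁾ - u, f⟩ = (1 - 1/n) ^ (t + 1)`.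
Cauchy–Schwarz against `‖f‖² = n! (n - 1) / n²` gives the bound.
-/

open Finset Equiv

section Convolution

variable {G : Type*} [Group G] [Fintype G]

theorem sum_convolution_mul (p q f : G → ℝ) :
    ∑ π, (∑ ρ, p ρ * q (ρ⁻¹ * π)) * f π = ∑ ρ, p ρ * ∑ g, q g * f (ρ * g) := by
  simp_rw [sum_mul, mul_sum, mul_assoc]
  rw [sum_comm]
  refine sum_congr rfl fun ρ _ => ?_
  exact (Fintype.sum_equiv (Equiv.mulLeft ρ) _ _ fun g => by simp).symm

theorem sum_iterate_convolution_mul_of_eigen {q f : G → ℝ} {c : ℝ}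
    (hf : ∀ ρ, ∑ g, q g * f (ρ * g) = c * f ρ) (p : ℕ → G → ℝ)
    (hp : ∀ s π, p (s + 1) π = ∑ ρ, p s ρ * q (ρ⁻¹ * π)) (s : ℕ) :
    ∑ π, p s π * f π = c ^ s * ∑ π, p 0 π * f π := by
  induction s with
  | zero => simp
  | succ s ih =>
    simp_rw [hp, sum_convolution_mul, hf, mul_left_comm _ c, ← mul_sum, ih, pow_succ]
    ring

end Convolution

theorem sq_sum_mul_le_sum_sub_sq_mul {ι : Type*} [Fintype ι] (p f : ι → ℝ) (c : ℝ)
    (hf : ∑ i, f i = 0) : (∑ i, p i * f i) ^ 2 ≤ (∑ i, (p i - c) ^ 2) * ∑ i, f i ^ 2 := by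
  have h : ∑ i, p i * f i = ∑ i, (p i - c) * f i := by
    simp [sub_mul, sum_sub_distrib, ← mul_sum, hf]
  rw [h]
  exact sum_mul_sq_le_sq_mul_sq _ _ _

section FixedPoints

variable {α : Type*} [Fintype α] [DecidableEq α]

theorem card_mul_card_filter_apply_eq_self (a : α) :
    Fintype.card α * #{π : Perm α | π a = a} = Fintype.card (Perm α) := by
  classical
  have h := MulAction.card_orbit_mul_card_stabilizer_eq_card_group (Perm α) a
  simp only [MulAction.orbit_eq_univ, Fintype.card_setUniv] at h
  convert h using 2
  rw [← Fintype.card_subtype]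
  rfl

theorem sum_ite_apply_eq_self [Nonempty α] (a : α) :
    ∑ π : Perm α, (if π a = a then 1 else 0 : ℝ) = Fintype.card (Perm α) / Fintype.card α := by
  rw [sum_boole, eq_div_iff (by positivity), mul_comm, ← card_mul_card_filter_apply_eq_self a]
  push_cast
  ring

noncomputable def fixDeviation (a : α) (π : Perm α) : ℝ :=
  (if π a = a then 1 else 0) - 1 / Fintype.card α

theorem sum_fixDeviation [Nonempty α] (a : α) : ∑ π, fixDeviation a π = 0 := by
  simp only [fixDeviation, sum_sub_distrib, sum_ite_apply_eq_self, sum_const, card_univ,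
    nsmul_eq_mul]
  ring

theorem sum_fixDeviation_sq [Nonempty α] (a : α) :
    ∑ π, fixDeviation a π ^ 2 =
      Fintype.card (Perm α) * (Fintype.card α - 1) / Fintype.card α ^ 2 := by
  have hsq : ∀ π : Perm α, fixDeviation a π ^ 2 =
      (if π a = a then 1 else 0) * (1 - 2 / Fintype.card α) + 1 / Fintype.card α ^ 2 := by
    intro π
    unfold fixDeviation
    split_ifs <;> ring
  simp only [hsq, sum_add_distrib, ← sum_mul, sum_ite_apply_eq_self, sum_const, card_univ,
    nsmul_eq_mul]
  field_simp
  ring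

end FixedPoints

section HitAndRun

variable {G : Type*} [Monoid G] [Fintype G] [DecidableEq G]

-- The paper's `q` when `σ i` cycles the top `i` cards; here `σ` is arbitrary.
noncomputable def hitAndRun (n : ℕ) (σ : ℕ → G) (π : G) : ℝ :=
  (1 / (n : ℝ)) * ∑ i ∈ Finset.Icc 1 n,
    (1 / (i : ℝ)) * ∑ j ∈ Finset.range i, (if π = (σ i) ^ j then (1 : ℝ) else 0)

theorem sum_hitAndRun_mul (n : ℕ) (σ : ℕ → G) (X : G → ℝ) :
    ∑ g, hitAndRun n σ g * X g =
      (1 / (n : ℝ)) * ∑ i ∈ Icc 1 n, (1 / (i : ℝ)) * ∑ j ∈ range i, X (σ i ^ j) := by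
  simp only [hitAndRun, sum_mul, mul_sum, ite_mul, one_mul, zero_mul, mul_assoc]
  rw [sum_comm]
  refine sum_congr rfl fun i _ => ?_
  rw [sum_comm]
  simp
theorem sum_hitAndRun {n : ℕ} (hn : n ≠ 0) (σ : ℕ → G) : ∑ g, hitAndRun n σ g = 1 := by
  have hi : ∀ i ∈ Icc 1 n, (1 / (i : ℝ)) * ∑ _j ∈ range i, (1 : ℝ) = 1 := fun i hi => by
    have : (i : ℝ) ≠ 0 := by have := (mem_Icc.mp hi).1; positivity
    simp [this]
  have h := sum_hitAndRun_mul n σ 1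
  simp only [Pi.one_apply, mul_one] at h
  rw [h, sum_congr rfl hi]
  simp [hn]

end HitAndRun

section HitAndRunPerm

variable {α : Type*} [Fintype α] [DecidableEq α] {n : ℕ} {σ : ℕ → Perm α} {a : α}

theorem sum_hitAndRun_mul_ite_apply_eq (hn : n ≠ 0) (hfix : ∀ i ∈ Ico 1 n, σ i a = a)
    (hcycle : ∀ c, #{j ∈ range n | (σ n ^ j) a = c} = 1) (c : α) :
    ∑ g, hitAndRun n σ g * (if g a = c then 1 else 0) =
      (1 / n) * ((n - 1) * (if c = a then 1 else 0) + 1 / n) := by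
  have hfixed : ∀ i ∈ Ico 1 n,
      (1 / (i : ℝ)) * ∑ j ∈ range i, (if (σ i ^ j) a = c then 1 else 0) =
        if c = a then 1 else 0 := by
    intro i hi
    have hi0 : (i : ℝ) ≠ 0 := by have := (mem_Ico.mp hi).1; positivity
    simp_rw [Perm.pow_apply_eq_self_of_apply_eq_self (hfix i hi), eq_comm (a := a)]
    simp [hi0]
  rw [sum_hitAndRun_mul, ← Ico_insert_right (by omega), sum_insert (by simp), sum_congr rfl hfixed,
    sum_boole, hcycle, sum_const, Nat.card_Ico, nsmul_eq_mul, Nat.cast_sub (by omega : 1 ≤ n)]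
  push_cast
  ring

theorem sum_hitAndRun_mul_fixDeviation_mul (hα : Fintype.card α = n) (hfix : ∀ i ∈ Ico 1 n, σ i a = a)
    (hcycle : ∀ c, #{j ∈ range n | (σ n ^ j) a = c} = 1) (ρ : Perm α) :
    ∑ g, hitAndRun n σ g * fixDeviation a (ρ * g) = (1 - 1 / n) * fixDeviation a ρ := by
  have : Nonempty α := ⟨a⟩
  have hn : n ≠ 0 := hα ▸ Fintype.card_ne_zero
  have hρ : ∀ g : Perm α, (ρ * g) a = a ↔ g a = ρ⁻¹ a := fun g => by
    rw [Perm.mul_apply, Perm.inv_def, Equiv.eq_symm_apply]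
  simp only [fixDeviation, hρ, hα, mul_sub, sum_sub_distrib, ← sum_mul,
    sum_hitAndRun_mul_ite_apply_eq hn hfix hcycle, sum_hitAndRun hn, Perm.inv_eq_iff_eq, eq_comm (a := a)]
  split_ifs <;> field_simp <;> ring

end HitAndRunPerm

theorem Fin.val_pow_apply_of_val_apply_eq_pred {n : ℕ} {g : Perm (Fin n)}
    (hg : ∀ x : Fin n, x.val ≠ 0 → (g x).val = x.val - 1) (x : Fin n) {j : ℕ} (hj : j ≤ x.val) :
    ((g ^ j) x).val = x.val - j := by
  induction j with
  | zero => simp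
  | succ j ih =>
    rw [pow_succ', Perm.mul_apply, hg _ (by omega), ih (by omega)]
    omega

theorem Fin.card_filter_pow_apply_eq_of_val_apply_eq_pred {n : ℕ} {g : Perm (Fin n)}
    (hg : ∀ x : Fin n, x.val ≠ 0 → (g x).val = x.val - 1) {x : Fin n} (hx : x.val + 1 = n)
    (c : Fin n) : #{j ∈ range n | (g ^ j) x = c} = 1 := by
  rw [card_eq_one]
  refine ⟨x.val - c.val, ext fun j => ?_⟩
  simp only [mem_filter, mem_range, mem_singleton]
  constructor
  · rintro ⟨hj, rfl⟩
    rw [Fin.val_pow_apply_of_val_apply_eq_pred hg x (by omega)]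
    omega
  · rintro rfl
    refine ⟨by omega, Fin.ext ?_⟩
    rw [Fin.val_pow_apply_of_val_apply_eq_pred hg x (by omega)]
    omega

/-- For the hit-and-run top-to-random measure q on S_n,
d₂(q^{(t)}, u) ≥ √(n−1) · (1 − 1/n)^t for all t ≥ 1. -/
theorem stmt_17 (n : ℕ) (hn : 2 ≤ n)
    (σ : ℕ → Equiv.Perm (Fin n))
    (hσ : ∀ (kk : ℕ) (hk1 : 1 ≤ kk) (hk2 : kk ≤ n) (x : Fin n),
      σ kk x =
        if x.val + 1 ≤ kk then
          (if x.val = 0 then (⟨kk - 1, by omega⟩ : Fin n)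
           else (⟨x.val - 1, by omega⟩ : Fin n))
        else x)
    (q : Equiv.Perm (Fin n) → ℝ)
    (hq : ∀ π : Equiv.Perm (Fin n),
      q π = (1 / (n : ℝ)) * ∑ i ∈ Finset.Icc 1 n,
        (1 / (i : ℝ)) * ∑ j ∈ Finset.range i,
          (if π = (σ i) ^ j then (1 : ℝ) else 0))
    (qt : ℕ → Equiv.Perm (Fin n) → ℝ)
    (hqt0 : ∀ π, qt 0 π = if π = 1 then 1 else 0)
    (hqts : ∀ (t : ℕ) (π : Equiv.Perm (Fin n)),
      qt (t + 1) π = ∑ ρ : Equiv.Perm (Fin n), qt t ρ * q (ρ⁻¹ * π))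
    (t : ℕ) :
    Real.sqrt ((Fintype.card (Equiv.Perm (Fin n)) : ℝ) *
        ∑ π : Equiv.Perm (Fin n),
          (qt t π - 1 / (Fintype.card (Equiv.Perm (Fin n)) : ℝ)) ^ 2) ≥
      Real.sqrt ((n : ℝ) - 1) * (1 - 1 / (n : ℝ)) ^ t := by
  obtain rfl : q = hitAndRun n σ := funext hq
  set a : Fin n := ⟨n - 1, by omega⟩
  have hfix : ∀ i ∈ Ico 1 n, σ i a = a := fun i hi => by
    have := mem_Ico.mp hi
    rw [hσ i this.1 this.2.le, if_neg (by simp [a]; omega)]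
  have hcycle := Fin.card_filter_pow_apply_eq_of_val_apply_eq_pred (g := σ n) (fun x hx => by
    rw [hσ n (by omega) le_rfl, if_pos (by omega), if_neg hx]) (x := a) (by simp [a]; omega)
  have heigen := sum_hitAndRun_mul_fixDeviation_mul (Fintype.card_fin n) hfix hcycle
  have hmean : ∑ π, qt t π * fixDeviation a π = (1 - 1 / n) ^ t * (1 - 1 / n) := by
    rw [sum_iterate_convolution_mul_of_eigen heigen qt hqts]
    simp [hqt0, fixDeviation]
  have : Nonempty (Fin n) := ⟨a⟩
  have hCS := sq_sum_mul_le_sum_sub_sq_mul (qt t) (fixDeviation a)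
    (1 / Fintype.card (Perm (Fin n))) (sum_fixDeviation a)
  rw [hmean, sum_fixDeviation_sq, Fintype.card_fin] at hCS
  have hn1 : (0 : ℝ) < n - 1 := by linarith [show (2 : ℝ) ≤ n by exact_mod_cast hn]
  have hlam : 1 - 1 / (n : ℝ) = (n - 1) / n := by field_simp
  rw [hlam] at hCS ⊢
  set N : ℝ := (Fintype.card (Perm (Fin n)) : ℝ)
  have hsq : (n - 1) * (((n - 1) / n) ^ t) ^ 2 ≤ N * ∑ π, (qt t π - 1 / N) ^ 2 :=
    le_of_mul_le_mul_left ((Eq.trans_le (by ring) hCS).trans_eq (by ring))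
      (by positivity : (0 : ℝ) < (n - 1) / n ^ 2)
  rw [ge_iff_le, ← Real.sqrt_sq (by positivity : (0 : ℝ) ≤ ((n - 1) / n) ^ t),
    ← Real.sqrt_mul hn1.le]
  exact Real.sqrt_le_sqrt hsq
end

section
/- Let G be a finite group with two symmetric probability measures μ and q whose Dirichlet forms satisfy E_μ ≤ A·E_q for some A > 0. Then the eigenvalues (listed in decreasing order) α_i of convolution by μ and β_i of convolution by q satisfy 1 − β_i ≥ (1/A)(1 − α_i) for all i. -/
/-!
Courant–Fischer: for each `i` some `f ≠ 0` lies both in the span of the eigenvectors of `M_μ`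
with eigenvalues `≤ α i` (dimension `n - i`) and in the span of those of `M_q` with eigenvalues
`≥ β i` (dimension `i + 1`), since the two dimensions add up to more than `n = |G|`. As
`|G| E_ν(f, f) = ⟨f, f⟩ - ⟨f, M_ν f⟩` for a probability measure `ν`, this `f` gives
`(1 - α i) ⟨f, f⟩ ≤ |G| E_μ(f, f) ≤ A |G| E_q(f, f) ≤ A (1 - β i) ⟨f, f⟩`.
-/

open Finset Polynomial Module Submodule Matrix

namespace OrthonormalBasis

variable {𝕜 E ι : Type*} [RCLike 𝕜] [NormedAddCommGroup E] [InnerProductSpace 𝕜 E] [Fintype ι]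

lemma finrank_span_image (b : OrthonormalBasis ι 𝕜 E) (s : Finset ι) :
    finrank 𝕜 (span 𝕜 (b '' s)) = #s := by
  have h := finrank_span_eq_card
    (b.orthonormal.linearIndependent.comp (Subtype.val : ↥(s : Set ι) → ι) Subtype.val_injective)
  rw [Set.range_comp, Subtype.range_coe] at h
  simpa using h

lemma repr_eq_zero_of_mem_span_image [DecidableEq ι] (b : OrthonormalBasis ι 𝕜 E) {s : Finset ι}
    {x : E} (hx : x ∈ span 𝕜 (b '' s)) {j : ι} (hj : j ∉ s) : b.repr x j = 0 := by
  rw [b.repr_apply_apply]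
  induction hx using Submodule.span_induction with
  | mem _ hy =>
    obtain ⟨k, hk, rfl⟩ := hy
    exact b.orthonormal.2 (ne_of_mem_of_not_mem hk hj).symm
  | zero => exact inner_zero_right _
  | add _ _ _ _ hy hz => rw [inner_add_right, hy, hz, add_zero]
  | smul _ _ _ hy => rw [inner_smul_right, hy, mul_zero]

end OrthonormalBasis

namespace LinearMap.IsSymmetric

variable {𝕜 E : Type*} [RCLike 𝕜] [NormedAddCommGroup E] [InnerProductSpace 𝕜 E]
  [FiniteDimensional 𝕜 E] {T : E →ₗ[𝕜] E} {n : ℕ}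

lemma re_inner_apply_self_eq_sum (hT : T.IsSymmetric) (hn : finrank 𝕜 E = n) (x : E) :
    RCLike.re (inner 𝕜 (T x) x) =
      ∑ j, hT.eigenvalues hn j * ‖(hT.eigenvectorBasis hn).repr x j‖ ^ 2 := by
  rw [← (hT.eigenvectorBasis hn).repr.inner_map_map, PiLp.inner_apply, map_sum]
  refine Finset.sum_congr rfl fun j _ => ?_
  rw [eigenvectorBasis_apply_self_apply, ← smul_eq_mul, inner_smul_real_left,
    inner_self_eq_norm_sq_to_K, RCLike.smul_re, ← RCLike.ofReal_pow, RCLike.ofReal_re]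

lemma re_inner_apply_self_le_of_mem_span (hT : T.IsSymmetric) (hn : finrank 𝕜 E = n) (i : Fin n)
    {x : E} (hx : x ∈ span 𝕜 (hT.eigenvectorBasis hn '' Ici i)) :
    RCLike.re (inner 𝕜 (T x) x) ≤ hT.eigenvalues hn i * ‖x‖ ^ 2 := by
  rw [hT.re_inner_apply_self_eq_sum hn, ← (hT.eigenvectorBasis hn).repr.norm_map,
    EuclideanSpace.norm_sq_eq, mul_sum]
  refine Finset.sum_le_sum fun j _ => ?_
  by_cases hij : i ≤ j
  · gcongr
    exact hT.eigenvalues_antitone hn hij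
  · rw [(hT.eigenvectorBasis hn).repr_eq_zero_of_mem_span_image hx (by simpa using hij)]
    simp

lemma le_re_inner_apply_self_of_mem_span (hT : T.IsSymmetric) (hn : finrank 𝕜 E = n) (i : Fin n)
    {x : E} (hx : x ∈ span 𝕜 (hT.eigenvectorBasis hn '' Iic i)) :
    hT.eigenvalues hn i * ‖x‖ ^ 2 ≤ RCLike.re (inner 𝕜 (T x) x) := by
  rw [hT.re_inner_apply_self_eq_sum hn, ← (hT.eigenvectorBasis hn).repr.norm_map,
    EuclideanSpace.norm_sq_eq, mul_sum]
  refine Finset.sum_le_sum fun j _ => ?_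
  by_cases hji : j ≤ i
  · gcongr
    exact hT.eigenvalues_antitone hn hji
  · rw [(hT.eigenvectorBasis hn).repr_eq_zero_of_mem_span_image hx (by simpa using hji)]
    simp

theorem exists_ne_zero_re_inner_le_and_le_re_inner {S : E →ₗ[𝕜] E} (hS : S.IsSymmetric)
    (hT : T.IsSymmetric) (hn : finrank 𝕜 E = n) (i : Fin n) :
    ∃ x ≠ 0, RCLike.re (inner 𝕜 (S x) x) ≤ hS.eigenvalues hn i * ‖x‖ ^ 2 ∧
      hT.eigenvalues hn i * ‖x‖ ^ 2 ≤ RCLike.re (inner 𝕜 (T x) x) := by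
  set V := span 𝕜 (hS.eigenvectorBasis hn '' Ici i)
  set W := span 𝕜 (hT.eigenvectorBasis hn '' Iic i)
  have hdim : finrank 𝕜 E < finrank 𝕜 V + finrank 𝕜 W := by
    simp only [V, W, OrthonormalBasis.finrank_span_image, Fin.card_Ici, Fin.card_Iic]
    omega
  obtain ⟨x, hxV, hxW, hx⟩ : ∃ x ∈ V, x ∈ W ∧ x ≠ 0 := by
    by_contra! h
    exact hdim.not_ge (finrank_add_finrank_le_of_disjoint (disjoint_def.mpr h))
  exact ⟨x, hx, hS.re_inner_apply_self_le_of_mem_span hn i hxV,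
    hT.le_re_inner_apply_self_of_mem_span hn i hxW⟩

end LinearMap.IsSymmetric

namespace Matrix

variable {𝕜 n : Type*} [RCLike 𝕜] [Fintype n] [DecidableEq n] {A B : Matrix n n 𝕜}

lemma re_inner_toEuclideanLin_apply_self (x : EuclideanSpace 𝕜 n) :
    RCLike.re (inner 𝕜 (toEuclideanLin A x) x) = RCLike.re (star x ⬝ᵥ A *ᵥ x) := by
  rw [← inner_re_symm, EuclideanSpace.inner_eq_star_dotProduct, dotProduct_comm]
  rfl

namespace IsHermitian

lemma eigenvalues₀_eq_of_charpoly_eq_prod (hA : A.IsHermitian) {α : Fin (Fintype.card n) → ℝ}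
    (hα : Antitone α) (h : A.charpoly = ∏ i, (X - C (α i : 𝕜))) : hA.eigenvalues₀ = α := by
  have hroots : A.charpoly.roots.map RCLike.re = univ.val.map α := by
    rw [h, roots_prod _ _ (by simp [prod_ne_zero_iff, X_sub_C_ne_zero])]
    simp [Function.comp_def]
  rw [← List.ofFn_inj, ← hA.sort_roots_charpoly_eq_eigenvalues₀, hroots, Fin.univ_val_map,
    Multiset.coe_sort]
  apply List.mergeSort_of_pairwise
  simp_rw [decide_eq_true_eq, ← List.sortedGE_iff_pairwise]
  exact hα.sortedGE_ofFn

theorem exists_ne_zero_re_dotProduct_le_and_le (hA : A.IsHermitian) (hB : B.IsHermitian)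
    (i : Fin (Fintype.card n)) :
    ∃ x : n → 𝕜, x ≠ 0 ∧
      RCLike.re (star x ⬝ᵥ A *ᵥ x) ≤ hA.eigenvalues₀ i * RCLike.re (star x ⬝ᵥ x) ∧
      hB.eigenvalues₀ i * RCLike.re (star x ⬝ᵥ x) ≤ RCLike.re (star x ⬝ᵥ B *ᵥ x) := by
  obtain ⟨x, hx0, hxA, hxB⟩ :=
    (isSymmetric_toEuclideanLin_iff.mpr hA).exists_ne_zero_re_inner_le_and_le_re_inner
      (isSymmetric_toEuclideanLin_iff.mpr hB) finrank_euclideanSpace i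
  have hnorm : ‖x‖ ^ 2 = RCLike.re (star x ⬝ᵥ x) := by
    rw [@norm_sq_eq_re_inner 𝕜, EuclideanSpace.inner_eq_star_dotProduct, dotProduct_comm]
  rw [hnorm, re_inner_toEuclideanLin_apply_self] at hxA hxB
  exact ⟨x.ofLp, by simpa using hx0, hxA, hxB⟩

end IsHermitian

end Matrix

section Convolution

variable {G R : Type*} [Group G]

def convolutionMatrix (ν : G → R) : Matrix G G R :=
  Matrix.of fun x y => ν (x⁻¹ * y)

lemma isHermitian_convolutionMatrix [Star R] {ν : G → R} (hν : ∀ g, star (ν g) = ν g⁻¹) :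
    (convolutionMatrix ν).IsHermitian := by
  ext x y
  simp [convolutionMatrix, hν]

variable [Fintype G]

lemma mulVec_convolutionMatrix [CommRing R] (ν f : G → R) (x : G) :
    (convolutionMatrix ν *ᵥ f) x = ∑ y, f (x * y) * ν y := by
  rw [mulVec, dotProduct, ← Equiv.sum_comp (Equiv.mulLeft x)]
  simp [convolutionMatrix, mul_comm]

lemma sum_sum_sub_sq_mul_eq [CommRing R] {ν : G → R} (hν : ∑ g, ν g = 1) (f : G → R) :
    ∑ x, ∑ y, (f (x * y) - f x) ^ 2 * ν y = 2 * (f ⬝ᵥ f - f ⬝ᵥ convolutionMatrix ν *ᵥ f) := by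
  have htrans : ∑ x, ∑ y, f (x * y) ^ 2 * ν y = f ⬝ᵥ f := by
    have hshift (y : G) : ∑ x, f (x * y) ^ 2 = ∑ x, f x ^ 2 :=
      Equiv.sum_comp (Equiv.mulRight y) (fun z => f z ^ 2)
    rw [sum_comm]
    simp_rw [← sum_mul, hshift, ← mul_sum, hν]
    simp [dotProduct, sq]
  have hconst : ∑ x, ∑ y, f x ^ 2 * ν y = f ⬝ᵥ f := by
    simp [← mul_sum, hν, dotProduct, sq]
  have hcross : ∑ x, ∑ y, f x * (f (x * y) * ν y) = f ⬝ᵥ convolutionMatrix ν *ᵥ f := by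
    simp [dotProduct, mulVec_convolutionMatrix, mul_sum]
  calc ∑ x, ∑ y, (f (x * y) - f x) ^ 2 * ν y
      = ∑ x, ∑ y, f (x * y) ^ 2 * ν y - 2 * ∑ x, ∑ y, f x * (f (x * y) * ν y)
          + ∑ x, ∑ y, f x ^ 2 * ν y := by
        simp only [mul_sum, ← sum_sub_distrib, ← sum_add_distrib]
        exact sum_congr rfl fun _ _ => sum_congr rfl fun _ _ => by ring
    _ = _ := by rw [htrans, hcross, hconst]; ring

noncomputable def dirichletForm (ν f : G → ℝ) : ℝ :=
  1 / (2 * (Fintype.card G : ℝ)) * ∑ x, ∑ y, (f (x * y) - f x) ^ 2 * ν y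

lemma dirichletForm_eq {ν : G → ℝ} (hν : ∑ g, ν g = 1) (f : G → ℝ) :
    dirichletForm ν f = (f ⬝ᵥ f - f ⬝ᵥ convolutionMatrix ν *ᵥ f) / Fintype.card G := by
  rw [dirichletForm, sum_sum_sub_sq_mul_eq hν]
  field_simp

end Convolution

theorem stmt_18_general (G : Type*) [Group G] [Fintype G] [DecidableEq G]
    (μ q : G → ℝ)
    (hμsum : ∑ g : G, μ g = 1) (hμsymm : ∀ g, μ g = μ g⁻¹)
    (hqsum : ∑ g : G, q g = 1) (hqsymm : ∀ g, q g = q g⁻¹)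
    (A : ℝ) (hA : 0 < A)
    (hcomp : ∀ f : G → ℝ,
      (1 / (2 * (Fintype.card G : ℝ))) *
          ∑ x : G, ∑ y : G, (f (x * y) - f x) ^ 2 * μ y ≤
        A * ((1 / (2 * (Fintype.card G : ℝ))) *
          ∑ x : G, ∑ y : G, (f (x * y) - f x) ^ 2 * q y))
    (Mμ Mq : Matrix G G ℝ)
    (hMμ : ∀ x y : G, Mμ x y = μ (x⁻¹ * y))
    (hMq : ∀ x y : G, Mq x y = q (x⁻¹ * y))
    (α β : Fin (Fintype.card G) → ℝ)
    (hα : Mμ.charpoly = ∏ i : Fin (Fintype.card G), (X - C (α i)))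
    (hβ : Mq.charpoly = ∏ i : Fin (Fintype.card G), (X - C (β i)))
    (hαdec : ∀ i j : Fin (Fintype.card G), i ≤ j → α j ≤ α i)
    (hβdec : ∀ i j : Fin (Fintype.card G), i ≤ j → β j ≤ β i) :
    ∀ i : Fin (Fintype.card G), 1 - β i ≥ (1 / A) * (1 - α i) := by
  intro i
  obtain rfl : Mμ = convolutionMatrix μ := Matrix.ext hMμ
  obtain rfl : Mq = convolutionMatrix q := Matrix.ext hMq
  have hμ := isHermitian_convolutionMatrix hμsymm
  have hq := isHermitian_convolutionMatrix hqsymm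
  rw [← hμ.eigenvalues₀_eq_of_charpoly_eq_prod (α := α) hαdec hα,
    ← hq.eigenvalues₀_eq_of_charpoly_eq_prod (α := β) hβdec hβ]
  obtain ⟨x, hx0, hxμ, hxq⟩ := hμ.exists_ne_zero_re_dotProduct_le_and_le hq i
  simp only [star_trivial, RCLike.re_to_real] at hxμ hxq
  have hD : dirichletForm μ x ≤ A * dirichletForm q x := hcomp x
  rw [dirichletForm_eq hμsum, dirichletForm_eq hqsum, ← mul_div_assoc,
    div_le_div_iff_of_pos_right (by positivity)] at hD
  have hxx : 0 < x ⬝ᵥ x := by simpa using dotProduct_star_self_pos_iff.mpr hx0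
  rw [ge_iff_le, one_div, inv_mul_le_iff₀ hA]
  refine le_of_mul_le_mul_right ?_ hxx
  calc (1 - hμ.eigenvalues₀ i) * (x ⬝ᵥ x) ≤ x ⬝ᵥ x - x ⬝ᵥ convolutionMatrix μ *ᵥ x := by linarith
    _ ≤ A * (x ⬝ᵥ x - x ⬝ᵥ convolutionMatrix q *ᵥ x) := hD
    _ ≤ A * (1 - hq.eigenvalues₀ i) * (x ⬝ᵥ x) := by
      rw [mul_assoc]
      gcongr
      linarith

/-- Dirichlet form comparison: if E_μ ≤ A·E_q, then the decreasingly ordered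
eigenvalues α_i of convolution by μ and β_i of convolution by q satisfy
1 − β_i ≥ (1/A)(1 − α_i) for all i. -/
theorem stmt_18 (G : Type*) [Group G] [Fintype G] [DecidableEq G]
    (μ q : G → ℝ)
    (hμpos : ∀ g, 0 ≤ μ g) (hμsum : ∑ g : G, μ g = 1) (hμsymm : ∀ g, μ g = μ g⁻¹)
    (hqpos : ∀ g, 0 ≤ q g) (hqsum : ∑ g : G, q g = 1) (hqsymm : ∀ g, q g = q g⁻¹)
    (A : ℝ) (hA : 0 < A)
    (hcomp : ∀ f : G → ℝ,
      (1 / (2 * (Fintype.card G : ℝ))) *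
          ∑ x : G, ∑ y : G, (f (x * y) - f x) ^ 2 * μ y ≤
        A * ((1 / (2 * (Fintype.card G : ℝ))) *
          ∑ x : G, ∑ y : G, (f (x * y) - f x) ^ 2 * q y))
    (Mμ Mq : Matrix G G ℝ)
    (hMμ : ∀ x y : G, Mμ x y = μ (x⁻¹ * y))
    (hMq : ∀ x y : G, Mq x y = q (x⁻¹ * y))
    (α β : Fin (Fintype.card G) → ℝ)
    (hα : Mμ.charpoly = ∏ i : Fin (Fintype.card G), (X - C (α i)))
    (hβ : Mq.charpoly = ∏ i : Fin (Fintype.card G), (X - C (β i)))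
    (hαdec : ∀ i j : Fin (Fintype.card G), i ≤ j → α j ≤ α i)
    (hβdec : ∀ i j : Fin (Fintype.card G), i ≤ j → β j ≤ β i) :
    ∀ i : Fin (Fintype.card G), 1 - β i ≥ (1 / A) * (1 - α i) :=
  stmt_18_general G μ q hμsum hμsymm hqsum hqsymm A hA hcomp Mμ Mq hMμ hMq α β hα hβ hαdec hβdec
end
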